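/- Let n ≥ 3 and let f : 𝔽₂ⁿ → 𝔽₂ be a nested canalizing function written in layered form with layer sizes k₁,…,k_r, and let A_l^f be the common activity of the variables in the l-th layer. Then the layer activities are strictly decreasing: A_1^f > A_2^f > ⋯ > A_r^f. -/

import Mathlib

/-!
Flipping a variable of layer `l` changes `f` exactly when all earlier monomials equal `1`, the
other variables of `M_l` make their part of `M_l` equal `1`, and the inner nest
`N_{l+1} = M_{l+1}(⋯)` vanishes. These events concern disjoint sets of variables, so
`A_l = 2^{1 - K_l} q_{l+1}`, where `K_l = k₁ + ⋯ + k_l` and `q_t` is the density of zeros of `N_t`.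
From `N_t = M_t (N_{t+1} ⊕ 1)` we get `q_t = 1 - 2^{-k_t} q_{t+1}` (and `q_{r+1} = 1`), so
`A_{l+1} < A_l` amounts to `2^{1 - k_{l+1}} q_{l+2} < 1`: either `l + 1 < r`, and then
`k_{l+1} ≥ 1` and `q_{l+2} < 1`, or `l + 1 = r`, and then `q_{r+1} = 1` and `k_r ≥ 2`.
-/

/-- `f` is nested canalizing in the variable order `σ(0), σ(1), …, σ(n-1)`
with canalizing input values `a` and canalized output values `b`:
`f x = b k` whenever `x (σ j) = a j + 1` for all `j < k` and `x (σ k) = a k`,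
and `f x = b (last) + 1` whenever `x (σ j) = a j + 1` for all `j`. -/
def IsNCF {n : ℕ} (f : (Fin n → ZMod 2) → ZMod 2) (σ : Equiv.Perm (Fin n))
    (a b : Fin n → ZMod 2) : Prop :=
  (∀ (k : Fin n) (x : Fin n → ZMod 2),
      (∀ j : Fin n, j < k → x (σ j) = a j + 1) → x (σ k) = a k → f x = b k) ∧
  (∀ k : Fin n, (∀ j : Fin n, j ≤ k) →
      ∀ x : Fin n → ZMod 2, (∀ j : Fin n, x (σ j) = a j + 1) → f x = b k + 1)

/-- The nested expression `M i * (M (i+1) * ( … * (M (i+t-1) + 1) … ) + 1)`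
with `t` factors, i.e. `nestVal M t i = Mᵢ(M_{i+1}(⋯(M_{i+t-1} ⊕ 1)⋯) ⊕ 1)`. -/
def nestVal (M : ℕ → ZMod 2) : ℕ → ℕ → ZMod 2
  | 0, _ => 0
  | 1, i => M i
  | (t + 2), i => M i * (nestVal M (t + 1) (i + 1) + 1)

/-- The extended monomial of the `i`-th layer, given the layer assignment `L`
and the complemented inputs `a`:  `Mᵢ(x) = ∏_{L j = i} (x j ⊕ a j)`. -/
def layerMon {n r : ℕ} (L : Fin n → Fin r) (a : Fin n → ZMod 2) (i : ℕ)
    (x : Fin n → ZMod 2) : ZMod 2 :=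
  ∏ j ∈ Finset.univ.filter (fun j : Fin n => (L j : ℕ) = i), (x j + a j)

/-- `kᵢ`, the number of variables in the `i`-th layer. -/
def layerSize {n r : ℕ} (L : Fin n → Fin r) (i : ℕ) : ℕ :=
  (Finset.univ.filter (fun j : Fin n => (L j : ℕ) = i)).card

/-- `K_l = k₀ + k₁ + ⋯ + k_{l-1}`, the number of variables in the first `l` layers. -/
def layerSum {n r : ℕ} (L : Fin n → Fin r) (l : ℕ) : ℕ :=
  ∑ i ∈ Finset.range l, layerSize L i

/-- `f` is given in the layered form
`f = M₁(M₂(⋯(M_{r−1}(M_r ⊕ 1) ⊕ 1)⋯) ⊕ 1) ⊕ b`, where the `Mᵢ` are extended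
monomials in pairwise disjoint sets of variables comprising all `n` variables
(the variable set of `Mᵢ` being the `i`-th layer `{j | L j = i}`), every layer
is nonempty, and the last layer has at least two variables. -/
def IsLayeredForm {n r : ℕ} (f : (Fin n → ZMod 2) → ZMod 2)
    (L : Fin n → Fin r) (a : Fin n → ZMod 2) (b : ZMod 2) : Prop :=
  1 ≤ r ∧
  (∀ i : Fin r, 1 ≤ layerSize L (i : ℕ)) ∧
  2 ≤ layerSize L (r - 1) ∧
  ∀ x : Fin n → ZMod 2, f x = nestVal (fun i => layerMon L a i x) r 0 + b

/-- The activity `λᵢᶠ = 2⁻ⁿ ∑_x (f(x with xᵢ flipped) ⊕ f(x))`, the Boolean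
difference being regarded as the integer 0 or 1. -/
def activity {n : ℕ} (f : (Fin n → ZMod 2) → ZMod 2) (i : Fin n) : ℚ :=
  (1 / 2 ^ n) * ∑ x : Fin n → ZMod 2,
    ((f (Function.update x i (x i + 1)) + f x).val : ℚ)

/-- The average sensitivity `sᶠ = ∑ᵢ λᵢᶠ`. -/
def avgSens {n : ℕ} (f : (Fin n → ZMod 2) → ZMod 2) : ℚ :=
  ∑ i : Fin n, activity f i


open Finset Function

namespace ZMod

lemma cast_val_mul_two (u v : ZMod 2) : (((u * v).val : ℕ) : ℚ) = u.val * v.val := by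
  have h : ∀ u v : ZMod 2, (u * v).val = u.val * v.val := by decide
  exact_mod_cast h u v

lemma cast_val_add_one_two (u : ZMod 2) : (((u + 1).val : ℕ) : ℚ) = 1 - u.val := by
  have h : ∀ u : ZMod 2, (u + 1).val + u.val = 1 := by decide
  linarith [show ((u + 1).val : ℚ) + u.val = 1 by exact_mod_cast h u]

lemma cast_val_prod_two {ι : Type*} (s : Finset ι) (g : ι → ZMod 2) :
    (((∏ j ∈ s, g j).val : ℕ) : ℚ) = ∏ j ∈ s, ((g j).val : ℚ) := by
  classical
  induction s using Finset.induction_on with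
  | empty => rfl
  | insert j s hj ih => rw [prod_insert hj, prod_insert hj, cast_val_mul_two, ih]

end ZMod

section Hypercube

variable {ι : Type*} [Fintype ι] [DecidableEq ι]

/- Flipping `x j` permutes the cube and fixes `F`, while it swaps the two values of
`(x j + c).val`, which add up to `1`. -/
lemma sum_val_add_mul_of_update_invariant (j : ι) (c : ZMod 2) (F : (ι → ZMod 2) → ℚ)
    (hF : ∀ x, F (update x j (x j + 1)) = F x) :
    ∑ x, ((x j + c).val : ℚ) * F x = 1 / 2 * ∑ x, F x := by
  have hinv : Involutive fun x : ι → ZMod 2 => update x j (x j + 1) := fun x => by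
    simp [add_assoc, show (1 + 1 : ZMod 2) = 0 from rfl]
  have hflip := Equiv.sum_comp (hinv.toPerm _) fun x => ((x j + c).val : ℚ) * F x
  simp only [Involutive.coe_toPerm, update_self, hF, add_right_comm _ (1 : ZMod 2),
    ZMod.cast_val_add_one_two, sub_mul, one_mul, sum_sub_distrib] at hflip
  linarith

lemma sum_prod_val_mul_of_update_invariant (a : ι → ZMod 2) (S : Finset ι)
    (F : (ι → ZMod 2) → ℚ) (hF : ∀ j ∈ S, ∀ x, F (update x j (x j + 1)) = F x) :
    ∑ x, (∏ j ∈ S, ((x j + a j).val : ℚ)) * F x = (1 / 2) ^ S.card * ∑ x, F x := by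
  induction S using Finset.induction_on with
  | empty => simp
  | insert j S hj ih =>
    have hprod : ∀ x : ι → ZMod 2, ∏ k ∈ S, ((update x j (x j + 1) k + a k).val : ℚ) =
        ∏ k ∈ S, ((x k + a k).val : ℚ) := fun x =>
      prod_congr rfl fun k hk => by rw [update_of_ne (ne_of_mem_of_not_mem hk hj)]
    simp only [prod_insert hj, mul_assoc]
    rw [sum_val_add_mul_of_update_invariant j (a j) _ fun x => by
        rw [hprod, hF j (mem_insert_self j S)],
      ih fun k hk => hF k (mem_insert_of_mem hk), card_insert_of_notMem hj, pow_succ]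
    ring

end Hypercube

/-- `nestZeroDensity k m t` is the fraction of inputs on which the nest
`nestVal M m t` of monomials in disjoint variable sets of sizes `k t, …, k (t + m - 1)`
vanishes: `M t` is `1` on a fraction `2 ^ (-k t)` of inputs, independently of the rest. -/
def nestZeroDensity (k : ℕ → ℕ) : ℕ → ℕ → ℚ
  | 0, _ => 1
  | m + 1, t => 1 - (1 / 2) ^ k t * nestZeroDensity k m (t + 1)

namespace nestZeroDensity

variable (k : ℕ → ℕ)

lemma nonneg_and_le_one (m t : ℕ) : 0 ≤ nestZeroDensity k m t ∧ nestZeroDensity k m t ≤ 1 := by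
  induction m generalizing t with
  | zero => norm_num [nestZeroDensity]
  | succ m ih =>
    obtain ⟨h0, h1⟩ := ih (t + 1)
    have hp : (0 : ℚ) < (1 / 2) ^ k t := by positivity
    have hp1 : (1 / 2 : ℚ) ^ k t ≤ 1 := pow_le_one₀ (by norm_num) (by norm_num)
    constructor <;> simp only [nestZeroDensity] <;> nlinarith

lemma pos {m t : ℕ} (hk : ∀ s, t ≤ s → s < t + m → 1 ≤ k s) : 0 < nestZeroDensity k m t := by
  cases m with
  | zero => norm_num [nestZeroDensity]
  | succ m =>
    obtain ⟨h0, h1⟩ := nonneg_and_le_one k m (t + 1)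
    have hp : (1 / 2 : ℚ) ^ k t ≤ 1 / 2 :=
      pow_le_of_le_one (by norm_num) (by norm_num) (by have := hk t le_rfl (by omega); omega)
    simp only [nestZeroDensity]
    nlinarith

lemma succ_lt_one {m t : ℕ} (hk : ∀ s, t < s → s ≤ t + m → 1 ≤ k s) :
    nestZeroDensity k (m + 1) t < 1 := by
  have := pos k (m := m) (t := t + 1) fun s h1 h2 => hk s (by omega) (by omega)
  simp only [nestZeroDensity]
  have hp : (0 : ℚ) < (1 / 2) ^ k t := by positivity
  nlinarith

end nestZeroDensity

lemma two_mul_half_pow_mul_nestZeroDensity_lt_one (k : ℕ → ℕ) (m t : ℕ)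
    (hk : ∀ s, t ≤ s → s ≤ t + m → 1 ≤ k s) (hlast : m = 0 → 2 ≤ k t) :
    2 * (1 / 2) ^ k t * nestZeroDensity k m (t + 1) < 1 := by
  cases m with
  | zero =>
    have hp : (1 / 2 : ℚ) ^ k t ≤ (1 / 2) ^ 2 :=
      pow_le_pow_of_le_one (by norm_num) (by norm_num) (hlast rfl)
    simp only [nestZeroDensity]
    linarith
  | succ m =>
    have hq := nestZeroDensity.succ_lt_one k (m := m) (t := t + 1)
      fun s h1 h2 => hk s (by omega) (by omega)
    have hq0 := (nestZeroDensity.nonneg_and_le_one k (m + 1) (t + 1)).1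
    have hp : (1 / 2 : ℚ) ^ k t ≤ 1 / 2 :=
      pow_le_of_le_one (by norm_num) (by norm_num) (by have := hk t le_rfl (by omega); omega)
    nlinarith

lemma nestVal_succ (M : ℕ → ZMod 2) (m t : ℕ) :
    nestVal M (m + 1) t = M t * (nestVal M m (t + 1) + 1) := by
  cases m with
  | zero => simp [nestVal]
  | succ m => rfl

lemma nestVal_congr {M M' : ℕ → ZMod 2} {m t : ℕ}
    (h : ∀ s, t ≤ s → s < t + m → M s = M' s) : nestVal M m t = nestVal M' m t := by
  induction m generalizing t with
  | zero => rfl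
  | succ m ih =>
    rw [nestVal_succ, nestVal_succ, h t le_rfl (by omega),
      ih fun s h1 h2 => h s (by omega) (by omega)]

lemma nestVal_add_nestVal {M M' : ℕ → ZMod 2} (l m t : ℕ) (h : ∀ s, s ≠ t + l → M' s = M s) :
    nestVal M' (l + m + 1) t + nestVal M (l + m + 1) t =
      (∏ s ∈ range l, M (t + s)) * (M' (t + l) + M (t + l)) * (nestVal M m (t + l + 1) + 1) := by
  have h2 : (1 + 1 : ZMod 2) = 0 := rfl
  induction l generalizing t with
  | zero =>
    rw [zero_add, nestVal_succ, nestVal_succ, nestVal_congr fun s hs _ => h s (by omega)]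
    simp only [range_zero, prod_empty, add_zero, one_mul]
    ring
  | succ l ih =>
    have key := ih (t + 1) fun s hs => h s (by omega)
    simp only [show ∀ s, t + 1 + s = t + (s + 1) by omega] at key
    rw [show l + 1 + m + 1 = l + m + 1 + 1 by omega, nestVal_succ M', nestVal_succ M,
      h t (by omega), prod_range_succ', add_zero]
    linear_combination M t * key + M t * h2

section Layered

variable {n r : ℕ} (L : Fin n → Fin r) (a : Fin n → ZMod 2)

lemma layerMon_update {s : ℕ} {j : Fin n} (hj : (L j : ℕ) ≠ s) (c : ZMod 2)
    (x : Fin n → ZMod 2) : layerMon L a s (update x j c) = layerMon L a s x :=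
  prod_congr rfl fun k hk => by
    rw [update_of_ne]
    rintro rfl
    exact hj (mem_filter.1 hk).2

lemma nestVal_layerMon_update {m t : ℕ} {j : Fin n} (hj : (L j : ℕ) < t) (c : ZMod 2)
    (x : Fin n → ZMod 2) :
    nestVal (fun s => layerMon L a s (update x j c)) m t =
      nestVal (fun s => layerMon L a s x) m t :=
  nestVal_congr fun _ hs _ => layerMon_update L a (by omega) c x

lemma layerMon_update_add_layerMon (i : Fin n) (x : Fin n → ZMod 2) :
    layerMon L a (L i) (update x i (x i + 1)) + layerMon L a (L i) x =
      ∏ j ∈ (univ.filter fun j => (L j : ℕ) = L i).erase i, (x j + a j) := by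
  have hi : i ∈ univ.filter fun j => (L j : ℕ) = L i := by simp
  have h2 : (1 + 1 : ZMod 2) = 0 := rfl
  unfold layerMon
  rw [← mul_prod_erase _ _ hi, ← mul_prod_erase _ (fun j => x j + a j) hi, update_self,
    prod_congr rfl fun j hj => by rw [update_of_ne (ne_of_mem_erase hj)]]
  linear_combination
    (x i + a i) * (∏ j ∈ (univ.filter fun j => (L j : ℕ) = L i).erase i, (x j + a j)) * h2

lemma prod_range_layerMon (l : ℕ) (x : Fin n → ZMod 2) :
    ∏ s ∈ range l, layerMon L a s x = ∏ j ∈ univ.filter fun j => (L j : ℕ) < l, (x j + a j) := by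
  rw [← prod_fiberwise_of_maps_to (g := fun j => (L j : ℕ)) (t := range l)
    fun j hj => mem_range.2 (mem_filter.1 hj).2]
  refine prod_congr rfl fun s hs => prod_congr ?_ fun _ _ => rfl
  ext
  simp only [mem_filter, mem_univ, true_and]
  have := mem_range.1 hs
  omega

lemma card_filter_lt_eq_layerSum (l : ℕ) :
    (univ.filter fun j => (L j : ℕ) < l).card = layerSum L l := by
  rw [card_eq_sum_card_fiberwise (f := fun j => (L j : ℕ)) (t := range l)
    fun j hj => mem_range.2 (mem_filter.1 hj).2]
  refine sum_congr rfl fun s hs => congrArg card ?_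
  ext
  simp only [mem_filter, mem_univ, true_and]
  have := mem_range.1 hs
  omega

lemma filter_lt_succ_erase (i : Fin n) :
    (univ.filter fun j => (L j : ℕ) < L i + 1).erase i =
      (univ.filter fun j => (L j : ℕ) < L i) ∪ (univ.filter fun j => (L j : ℕ) = L i).erase i := by
  ext j
  simp only [mem_erase, mem_filter, mem_univ, true_and, mem_union]
  by_cases hji : j = i
  · subst hji; simp
  · simp only [hji, ne_eq, not_false_eq_true, true_and]
    omega

lemma update_add_of_layered {f : (Fin n → ZMod 2) → ZMod 2} {b : ZMod 2}
    (hf : ∀ x, f x = nestVal (fun s => layerMon L a s x) r 0 + b) (i : Fin n)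
    (x : Fin n → ZMod 2) :
    f (update x i (x i + 1)) + f x =
      (∏ j ∈ (univ.filter fun j => (L j : ℕ) < L i + 1).erase i, (x j + a j)) *
        (nestVal (fun s => layerMon L a s x) (r - (L i + 1)) (L i + 1) + 1) := by
  have hb : b + b = 0 := CharTwo.add_self_eq_zero b
  have hr : r = L i + (r - (L i + 1)) + 1 := by omega
  have hdiff := nestVal_add_nestVal (M := fun s => layerMon L a s x)
    (M' := fun s => layerMon L a s (update x i (x i + 1))) (L i) (r - (L i + 1)) 0
    fun s hs => layerMon_update L a (by omega) _ x
  simp only [zero_add] at hdiff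
  rw [← hr] at hdiff
  have hdisj : Disjoint (univ.filter fun j => (L j : ℕ) < L i)
      ((univ.filter fun j => (L j : ℕ) = L i).erase i) :=
    disjoint_left.2 fun j hj hj' => by
      simp only [mem_erase, mem_filter, mem_univ, true_and] at hj hj'
      omega
  rw [prod_range_layerMon, layerMon_update_add_layerMon] at hdiff
  rw [hf, hf, filter_lt_succ_erase, prod_union hdisj]
  linear_combination hdiff + hb

lemma sum_val_nestVal_add_one (m t : ℕ) :
    ∑ x, ((nestVal (fun s => layerMon L a s x) m t + 1).val : ℚ) =
      2 ^ n * nestZeroDensity (layerSize L) m t := by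
  induction m generalizing t with
  | zero =>
    have h1 : ((1 : ZMod 2).val : ℚ) = 1 := rfl
    simp [nestVal, nestZeroDensity, h1]
  | succ m ih =>
    have hx : ∀ x, ((nestVal (fun s => layerMon L a s x) (m + 1) t + 1).val : ℚ) =
        1 - (∏ j ∈ univ.filter fun j => (L j : ℕ) = t, ((x j + a j).val : ℚ)) *
          ((nestVal (fun s => layerMon L a s x) m (t + 1) + 1).val : ℚ) := fun x => by
      rw [nestVal_succ, ZMod.cast_val_add_one_two, ZMod.cast_val_mul_two, layerMon,
        ZMod.cast_val_prod_two]
    simp only [hx, sum_sub_distrib]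
    rw [sum_prod_val_mul_of_update_invariant a _ _ fun j hj x => ?_, ih]
    · simp only [sum_const, card_univ, Fintype.card_fun, ZMod.card, Fintype.card_fin,
        nsmul_eq_mul, Nat.cast_pow, Nat.cast_ofNat, mul_one, nestZeroDensity, layerSize]
      ring
    · rw [nestVal_layerMon_update L a (by simp only [mem_filter] at hj; omega)]

lemma activity_eq_of_layered {f : (Fin n → ZMod 2) → ZMod 2} {b : ZMod 2}
    (hf : ∀ x, f x = nestVal (fun s => layerMon L a s x) r 0 + b) (i : Fin n) :
    activity f i = 2 * (1 / 2) ^ layerSum L (L i + 1) *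
      nestZeroDensity (layerSize L) (r - (L i + 1)) (L i + 1) := by
  have hcard : ((univ.filter fun j => (L j : ℕ) < L i + 1).erase i).card + 1 =
      layerSum L (L i + 1) := by
    rw [card_erase_of_mem (by simp), ← card_filter_lt_eq_layerSum]
    have : 0 < (univ.filter fun j => (L j : ℕ) < L i + 1).card := card_pos.2 ⟨i, by simp⟩
    omega
  simp only [activity, update_add_of_layered L a hf, ZMod.cast_val_mul_two,
    ZMod.cast_val_prod_two]
  rw [sum_prod_val_mul_of_update_invariant a _ _ fun j hj x => ?_, sum_val_nestVal_add_one,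
    ← hcard, pow_succ]
  · field_simp
  · have := (mem_filter.1 (mem_of_mem_erase hj)).2
    rw [nestVal_layerMon_update L a (by omega)]

end Layered

theorem statement15_general {n r : ℕ} (f : (Fin n → ZMod 2) → ZMod 2)
    (L : Fin n → Fin r) (a : Fin n → ZMod 2) (b : ZMod 2)
    (h : IsLayeredForm f L a b)
    (l : ℕ) (hl : l + 1 < r) (i i' : Fin n)
    (hi : (L i : ℕ) = l) (hi' : (L i' : ℕ) = l + 1) :
    activity f i' < activity f i := by
  obtain ⟨-, hsize, hlast, hf⟩ := h
  have hsize' : ∀ s < r, 1 ≤ layerSize L s := fun s hs => hsize ⟨s, hs⟩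
  have hq := two_mul_half_pow_mul_nestZeroDensity_lt_one (layerSize L) (r - (l + 1 + 1)) (l + 1)
    (fun s _ hs => hsize' s (by omega)) (fun hm => by rwa [show l + 1 = r - 1 by omega])
  have hP : (0 : ℚ) < (1 / 2) ^ layerSum L (l + 1) := by positivity
  rw [activity_eq_of_layered L a hf i, activity_eq_of_layered L a hf i', hi, hi',
    show r - (l + 1) = r - (l + 1 + 1) + 1 by omega, nestZeroDensity, layerSum, sum_range_succ,
    ← layerSum, pow_add]
  nlinarith [mul_lt_mul_of_pos_left hq hP]

/-- For `n ≥ 3`, the layer activities of a nested canalizing function in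
layered form are strictly decreasing: `A₁ > A₂ > ⋯ > A_r`, i.e. any variable
in layer `l+1` has strictly smaller activity than any variable in layer `l`. -/
theorem statement15 {n r : ℕ} (hn : 3 ≤ n) (f : (Fin n → ZMod 2) → ZMod 2)
    (L : Fin n → Fin r) (a : Fin n → ZMod 2) (b : ZMod 2)
    (h : IsLayeredForm f L a b)
    (l : ℕ) (hl : l + 1 < r) (i i' : Fin n)
    (hi : (L i : ℕ) = l) (hi' : (L i' : ℕ) = l + 1) :
    activity f i' < activity f i :=
  statement15_general f L a b h l hl i i' hi hi'
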